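/- Let Q be a weight list which contracts to a smooth point and contains a unique (−1)-curve. If K·Q = 0, then, up to reversal, Q = [(2)_k, 3, 1, 2] for some integer k ≥ 0. -/

import Mathlib

/-- One contraction move on a weight list: an entry equal to `1` (representing a
`(-1)`-curve) is removed and the weights of its neighbours are decreased by one. -/
inductive ContractionStep : List ℤ → List ℤ → Prop
  | mid (L R : List ℤ) (a b : ℤ) :
      ContractionStep (L ++ a :: 1 :: b :: R) (L ++ (a - 1) :: (b - 1) :: R)
  | head (b : ℤ) (R : List ℤ) :
      ContractionStep (1 :: b :: R) ((b - 1) :: R)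
  | last (L : List ℤ) (a : ℤ) :
      ContractionStep (L ++ [a, 1]) (L ++ [a - 1])
  | single : ContractionStep [1] []

/-- A weight list contracts to a smooth point if some finite sequence of
contraction moves transforms it into the empty list. -/
def ContractsToPoint (Q : List ℤ) : Prop :=
  Relation.ReflTransGen ContractionStep Q []

/-- `K·Q = Σᵢ (aᵢ - 2)`, the intersection of the chain with the canonical divisor. -/
def kDot (Q : List ℤ) : ℤ := (Q.map (fun a => a - 2)).sum


@[simp] lemma kDot_nil : kDot [] = 0 := rfl
@[simp] lemma kDot_cons (a : ℤ) (Q : List ℤ) : kDot (a :: Q) = (a - 2) + kDot Q := by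
  simp [kDot]
@[simp] lemma kDot_append (A B : List ℤ) : kDot (A ++ B) = kDot A + kDot B := by
  simp [kDot]

lemma step_has_one {Q P : List ℤ} (h : ContractionStep Q P) : (1:ℤ) ∈ Q := by
  cases h <;> simp

lemma exists_step {Q : List ℤ} (h : ContractsToPoint Q) (hne : Q ≠ []) :
    ∃ P, ContractionStep Q P ∧ ContractsToPoint P := by
  rcases h.cases_head with h | ⟨c, h1, h2⟩
  · exact absurd h hne
  · exact ⟨c, h1, h2⟩

lemma contracts_pos {Q : List ℤ} (h : ContractsToPoint Q) : ∀ x ∈ Q, (1:ℤ) ≤ x := by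
  induction h using Relation.ReflTransGen.head_induction_on with
  | refl => simp
  | head hstep htail ih =>
    cases hstep with
    | mid L R a b =>
      intro x hx
      simp only [List.mem_append, List.mem_cons] at hx ih
      rcases hx with h | h | h | h | h
      · exact ih x (Or.inl h)
      · have := ih (a-1) (Or.inr (Or.inl rfl)); omega
      · omega
      · have := ih (b-1) (Or.inr (Or.inr (Or.inl rfl))); omega
      · exact ih x (Or.inr (Or.inr (Or.inr h)))
    | head b R =>
      intro x hx
      simp only [List.mem_cons] at hx ih
      rcases hx with h | h | h
      · omega
      · have := ih (b-1) (Or.inl rfl); omega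
      · exact ih x (Or.inr h)
    | last L a =>
      intro x hx
      simp only [List.mem_append, List.mem_cons, List.mem_singleton] at hx ih
      rcases hx with h | h | h | h
      · exact ih x (Or.inl h)
      · have := ih (a-1) (Or.inr (by simp)); omega
      · omega
      · simp at h
    | single => intro x hx; simp at hx; omega

lemma uoa : ∀ (A C B D : List ℤ), (1:ℤ) ∉ A → (1:ℤ) ∉ C →
    A ++ 1 :: B = C ++ 1 :: D → A = C ∧ B = D := by
  intro A
  induction A with
  | nil =>
    intro C B D _ hC h
    cases C with
    | nil => simpa using h
    | cons c C' =>
      simp only [List.nil_append, List.cons_append, List.cons.injEq] at h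
      exact (hC (by rw [← h.1]; exact List.mem_cons_self)).elim
  | cons a A' ih =>
    intro C B D hA hC h
    cases C with
    | nil =>
      simp only [List.cons_append, List.nil_append, List.cons.injEq] at h
      exact (hA (by rw [h.1]; exact List.mem_cons_self)).elim
    | cons c C' =>
      simp only [List.cons_append, List.cons.injEq] at h
      obtain ⟨rfl, h2⟩ := h
      have := ih C' B D (fun hm => hA (List.mem_cons_of_mem _ hm))
        (fun hm => hC (List.mem_cons_of_mem _ hm)) h2
      exact ⟨by rw [this.1], this.2⟩

lemma concat_eq {L M : List ℤ} {x y : ℤ} (h : L ++ [x] = M ++ [y]) : L = M ∧ x = y := by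
  have h2 := congrArg List.reverse h
  simp only [List.reverse_append, List.reverse_singleton, List.singleton_append,
    List.cons.injEq] at h2
  exact ⟨List.reverse_injective h2.2, h2.1⟩

lemma count_one_split : ∀ (Q : List ℤ), Q.count 1 = 1 →
    ∃ A B, Q = A ++ 1 :: B ∧ (1:ℤ) ∉ A ∧ (1:ℤ) ∉ B := by
  intro Q
  induction Q with
  | nil => intro h; simp at h
  | cons q Q' ih =>
    intro h
    by_cases hq : q = 1
    · subst hq
      refine ⟨[], Q', rfl, by simp, ?_⟩
      rw [List.count_cons_self] at h
      exact List.count_eq_zero.mp (by omega)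
    · rw [List.count_cons_of_ne hq] at h
      obtain ⟨A, B, rfl, hA, hB⟩ := ih h
      refine ⟨q :: A, B, rfl, ?_, hB⟩
      simp only [List.mem_cons]
      rintro (h | h)
      · exact hq h.symm
      · exact hA h

lemma pair_eq : ∀ (L' L R R' : List ℤ) (a b : ℤ),
    (1:ℤ) ∉ L → (1:ℤ) ∉ R → L' ++ a :: 1 :: b :: R' = L ++ 1 :: 1 :: R → a = 1 ∨ b = 1 := by
  intro L'
  induction L' with
  | nil =>
    intro L R R' a b hL hR h
    cases L with
    | nil =>
      simp only [List.nil_append, List.cons.injEq] at h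
      exact Or.inl h.1
    | cons x L₂ =>
      simp only [List.nil_append, List.cons_append, List.cons.injEq] at h
      obtain ⟨rfl, h⟩ := h
      cases L₂ with
      | nil =>
        simp only [List.nil_append, List.cons.injEq] at h
        exact Or.inr h.2.1
      | cons y L₃ =>
        simp only [List.cons_append, List.cons.injEq] at h
        exact absurd (by rw [h.1]; exact List.mem_cons_of_mem _ (List.mem_cons_self)) hL
  | cons c L₂ ih =>
    intro L R R' a b hL hR h
    cases L with
    | nil =>
      simp only [List.cons_append, List.nil_append, List.cons.injEq] at h
      obtain ⟨rfl, h⟩ := h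
      cases L₂ with
      | nil =>
        simp only [List.nil_append, List.cons.injEq] at h
        exact Or.inl h.1
      | cons d L₃ =>
        simp only [List.cons_append, List.cons.injEq] at h
        obtain ⟨rfl, h⟩ := h
        exact absurd (by rw [← h]; simp) hR
    | cons e L₄ =>
      simp only [List.cons_append, List.cons.injEq] at h
      exact ih L₄ R R' a b (fun hm => hL (List.mem_cons_of_mem _ hm)) hR h.2

lemma no_pair (L R : List ℤ) (hL : (1:ℤ) ∉ L) (hR : (1:ℤ) ∉ R) :
    ¬ ContractsToPoint (L ++ 1 :: 1 :: R) := by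
  intro h
  obtain ⟨P, hs, hP⟩ := exists_step h (by simp)
  have hpos := contracts_pos hP
  have h0 : ∃ x ∈ P, x ≤ (0:ℤ) := by
    generalize hZ : L ++ 1 :: 1 :: R = Z at hs
    cases hs with
    | mid L' R' a' b' =>
      rcases pair_eq L' L R R' a' b' hL hR hZ.symm with rfl | rfl
      · exact ⟨0, by norm_num, le_refl 0⟩
      · exact ⟨0, by norm_num, le_refl 0⟩
    | head b' R'' =>
      cases L with
      | nil =>
        simp only [List.nil_append, List.cons.injEq] at hZ
        obtain ⟨-, hb, -⟩ := hZ
        exact ⟨b' - 1, by simp, by omega⟩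
      | cons x L₂ =>
        simp only [List.cons_append, List.cons.injEq] at hZ
        exact absurd (by rw [hZ.1]; exact List.mem_cons_self) hL
    | last L'' a' =>
      rcases List.eq_nil_or_concat R with rfl | ⟨R₂, r, rfl⟩
      · have h2 : (L ++ [1]) ++ [1] = (L'' ++ [a']) ++ [1] := by simpa using hZ
        obtain ⟨h4, -⟩ := concat_eq h2
        obtain ⟨-, rfl⟩ := concat_eq h4.symm
        exact ⟨0, by norm_num, le_refl 0⟩
      · have h2 : (L ++ 1 :: 1 :: R₂) ++ [r] = (L'' ++ [a']) ++ [1] := by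
          simpa using hZ
        obtain ⟨-, rfl⟩ := concat_eq h2
        exact absurd (by simp) hR
    | single =>
      have := congrArg List.length hZ
      simp only [List.length_append, List.length_cons] at this
      simp at this
      omega
  obtain ⟨x, hx, hx0⟩ := h0
  have := hpos x hx
  omega

lemma count_one_app {A B : List ℤ} (hA : (1:ℤ) ∉ A) (hB : (1:ℤ) ∉ B) :
    (A ++ 1 :: B).count 1 = 1 := by
  simp [List.count_append, List.count_cons_self, List.count_eq_zero.2 hA,
    List.count_eq_zero.2 hB]

lemma two_mem_count {X Y : List ℤ} (h1 : (1:ℤ) ∈ X) (h2 : (1:ℤ) ∈ Y) :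
    (X ++ Y).count 1 ≠ 1 := by
  rw [List.count_append]
  have k1 : 0 < X.count 1 := List.count_pos_iff.mpr h1
  have k2 : 0 < Y.count 1 := List.count_pos_iff.mpr h2
  omega

lemma count_one_unique {L R : List ℤ} {a b : ℤ} (h : (L ++ a :: 1 :: b :: R).count 1 = 1) :
    (1:ℤ) ∉ L ∧ a ≠ 1 ∧ b ≠ 1 ∧ (1:ℤ) ∉ R := by
  refine ⟨fun hm => ?_, fun ha => ?_, fun hb => ?_, fun hm => ?_⟩
  · exact two_mem_count hm (by simp) h
  · subst ha
    exact two_mem_count (X := L ++ [1]) (Y := 1 :: b :: R) (by simp) (by simp)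
      (by simpa using h)
  · subst hb
    exact two_mem_count (X := L ++ [a, 1]) (Y := 1 :: R) (by simp) (by simp)
      (by simpa using h)
  · exact two_mem_count (X := L ++ [a, 1, b]) (Y := R) (by simp) hm (by simpa using h)

lemma step_unique {A B P : List ℤ} (hA : (1:ℤ) ∉ A) (hB : (1:ℤ) ∉ B)
    (hs : ContractionStep (A ++ 1 :: B) P) :
    (A = [] ∧ B = [] ∧ P = []) ∨
    (∃ b R, A = [] ∧ B = b :: R ∧ P = (b - 1) :: R) ∨
    (∃ L a, B = [] ∧ A = L ++ [a] ∧ P = L ++ [a - 1]) ∨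
    (∃ L a b R, A = L ++ [a] ∧ B = b :: R ∧ P = L ++ (a - 1) :: (b - 1) :: R) := by
  have h1 : (A ++ 1 :: B).count 1 = 1 := count_one_app hA hB
  generalize hZ : A ++ 1 :: B = Z at hs
  cases hs with
  | mid L R a b =>
    rw [hZ] at h1
    obtain ⟨hL, ha, hb, hR⟩ := count_one_unique h1
    have h2 : (L ++ [a]) ++ 1 :: (b :: R) = A ++ 1 :: B := by simpa using hZ.symm
    have h3 : (1:ℤ) ∉ L ++ [a] := by simp [hL, ha]; tauto
    have h4 := uoa (L ++ [a]) A (b :: R) B h3 hA h2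
    exact Or.inr (Or.inr (Or.inr ⟨L, a, b, R, h4.1.symm, h4.2.symm, rfl⟩))
  | head b R =>
    cases A with
    | nil =>
      simp only [List.nil_append, List.cons.injEq] at hZ
      exact Or.inr (Or.inl ⟨b, R, rfl, hZ.2, rfl⟩)
    | cons x A₂ =>
      simp only [List.cons_append, List.cons.injEq] at hZ
      exact absurd (by rw [hZ.1]; exact List.mem_cons_self) hA
  | last L a =>
    rw [hZ] at h1
    have h3 : (1:ℤ) ∉ L ++ [a] := by
      have h5 : ((L ++ [a]) ++ 1 :: ([] : List ℤ)).count 1 = 1 := by simpa using h1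
      rw [List.count_append] at h5
      simp only [List.count_cons_self, List.count_nil] at h5
      exact List.count_eq_zero.mp (by omega)
    have h2 : (L ++ [a]) ++ 1 :: ([] : List ℤ) = A ++ 1 :: B := by simpa using hZ.symm
    have h4 := uoa (L ++ [a]) A [] B h3 hA h2
    exact Or.inr (Or.inr (Or.inl ⟨L, a, h4.2.symm, h4.1.symm, rfl⟩))
  | single =>
    cases A with
    | nil =>
      simp only [List.nil_append, List.cons.injEq] at hZ
      exact Or.inl ⟨rfl, hZ.2, rfl⟩
    | cons x A₂ =>
      simp only [List.cons_append, List.cons.injEq] at hZ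
      exact absurd (by rw [hZ.1]; exact List.mem_cons_self) hA

lemma kDot_nonneg {L : List ℤ} (h : ∀ x ∈ L, (2:ℤ) ≤ x) : 0 ≤ kDot L := by
  induction L with
  | nil => simp
  | cons a L ih =>
    have h1 := h a (by simp)
    have h2 := ih (fun x hx => h x (by simp [hx]))
    simp only [kDot_cons]
    omega

lemma all_two : ∀ (L : List ℤ), (∀ x ∈ L, (2:ℤ) ≤ x) → kDot L = 0 →
    L = List.replicate L.length 2 := by
  intro L
  induction L with
  | nil => simp
  | cons a L ih =>
    intro h hk
    have h2 := h a (by simp)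
    have h3 := kDot_nonneg (L := L) (fun x hx => h x (by simp [hx]))
    simp only [kDot_cons] at hk
    have ha : a = 2 := by omega
    have h4 : kDot L = 0 := by omega
    subst ha
    rw [ih (fun x hx => h x (by simp [hx])) h4]
    simp [List.replicate_succ]

lemma repcast (n : ℕ) : List.replicate n (2:ℤ) =
    (List.replicate n (2:ℕ)).flatMap fun a => [(a : ℤ)] := by
  induction n with
  | zero => rfl
  | succ n ih => simp [List.replicate_succ] at ih ⊢; simpa using ih



/-- If a weight list contracts to a smooth point, contains a unique `(-1)`-curve
and `K·Q = 0`, then up to reversal `Q = [(2)_k, 3, 1, 2]` for some `k ≥ 0`. -/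
theorem chain_KQ_zero (Q : List ℤ) (hQ : ContractsToPoint Q)
    (huniq : Q.count 1 = 1) (hK : kDot Q = 0) :
    ∃ k : ℕ, Q = List.replicate k 2 ++ [3, 1, 2] ∨
      Q = (List.replicate k 2 ++ [3, 1, 2]).reverse := by
  revert huniq hK
  induction hQ using Relation.ReflTransGen.head_induction_on with
  | refl => intro h _; simp at h
  | @head Q Q₁ hstep htail ih =>
    intro huniq hK
    have hpos := contracts_pos (Relation.ReflTransGen.head hstep htail)
    obtain ⟨A, B, rfl, hA, hB⟩ := count_one_split Q huniq
    rcases step_unique hA hB hstep with ⟨rfl, rfl, rfl⟩ | ⟨b, R, rfl, rfl, rfl⟩ |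
      ⟨L, a, rfl, rfl, rfl⟩ | ⟨L, a, b, R, rfl, rfl, rfl⟩
    · -- Q = [1]
      exfalso; simp [kDot] at hK
    · -- Q = 1 :: b :: R
      rw [List.mem_cons] at hB
      push_neg at hB
      obtain ⟨hb1, hR⟩ := hB
      have hbpos := hpos b (by simp)
      by_cases hb : b = 2
      · subst hb
        have hc : ((2 - 1 : ℤ) :: R).count 1 = 1 := by
          norm_num [List.count_cons_self, List.count_eq_zero.2 hR]
        have hkR : kDot R = 1 := by
          simp only [List.nil_append, kDot_cons] at hK; linarith
        have hk1 : kDot ((2 - 1 : ℤ) :: R) = 0 := by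
          simp only [kDot_cons]; linarith
        obtain ⟨k, hk | hk⟩ := ih hc hk1
        · exfalso
          cases k with
          | zero => norm_num at hk
          | succ k => simp [List.replicate_succ] at hk
        · exfalso
          simp only [List.reverse_append, List.reverse_replicate] at hk
          norm_num at hk
      · exfalso
        obtain ⟨P, hs, _⟩ := exists_step htail (by simp)
        have h1 := step_has_one hs
        rw [List.mem_cons] at h1
        rcases h1 with h | h
        · omega
        · exact hR h
    · -- Q = L ++ [a] ++ [1]
      rw [List.mem_append, List.mem_singleton] at hA
      push_neg at hA
      obtain ⟨hL, ha1⟩ := hA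
      have hapos := hpos a (by simp)
      by_cases ha : a = 2
      · subst ha
        have hc : (L ++ [(2 - 1 : ℤ)]).count 1 = 1 := by
          rw [List.count_append]
          norm_num [List.count_eq_zero.2 hL]
        have hkL : kDot L = 1 := by
          simp only [kDot_append, kDot_cons, kDot_nil] at hK; linarith
        have hk1 : kDot (L ++ [(2 - 1 : ℤ)]) = 0 := by
          simp only [kDot_append, kDot_cons, kDot_nil]; linarith
        obtain ⟨k, hk | hk⟩ := ih hc hk1
        · exfalso
          have hk' : L ++ [(2 - 1 : ℤ)] = (List.replicate k 2 ++ [3, 1]) ++ [2] := by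
            simpa using hk
          have := (concat_eq hk').2
          omega
        · exfalso
          have hk2 := congrArg List.reverse hk
          simp only [List.reverse_append, List.reverse_reverse, List.reverse_singleton,
            List.singleton_append] at hk2
          cases k with
          | zero => norm_num at hk2
          | succ k => simp [List.replicate_succ] at hk2
      · exfalso
        obtain ⟨P, hs, _⟩ := exists_step htail (by simp)
        have h1 := step_has_one hs
        rw [List.mem_append, List.mem_singleton] at h1
        rcases h1 with h | h
        · exact hL h
        · omega
    · -- Q = (L ++ [a]) ++ 1 :: b :: R
      rw [List.mem_append, List.mem_singleton] at hA
      push_neg at hA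
      obtain ⟨hL1, ha1⟩ := hA
      rw [List.mem_cons] at hB
      push_neg at hB
      obtain ⟨hb1, hR1⟩ := hB
      have hL2 : ∀ x ∈ L, (2:ℤ) ≤ x := by
        intro x hx
        have h1 := hpos x (by simp [hx])
        have h2 : x ≠ 1 := fun he => hL1 (he ▸ hx)
        omega
      have hR2 : ∀ x ∈ R, (2:ℤ) ≤ x := by
        intro x hx
        have h1 := hpos x (by simp [hx])
        have h2 : x ≠ 1 := fun he => hR1 (he ▸ hx)
        omega
      have ha2 : (2:ℤ) ≤ a := by
        have := hpos a (by simp); omega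
      have hb2 : (2:ℤ) ≤ b := by
        have := hpos b (by simp); omega
      have hKL := kDot_nonneg hL2
      have hKR := kDot_nonneg hR2
      have hKQ : kDot L + (a - 2) + (1 - 2) + (b - 2) + kDot R = 0 := by
        simp only [kDot_append, kDot_cons, kDot_nil] at hK; linarith
      have tri : (a = 2 ∧ b = 2) ∨ (a = 3 ∧ b = 2 ∧ kDot L = 0 ∧ kDot R = 0) ∨
          (a = 2 ∧ b = 3 ∧ kDot L = 0 ∧ kDot R = 0) := by
        generalize kDot L = sL at *
        generalize kDot R = sR at *
        omega
      rcases tri with ⟨rfl, rfl⟩ | ⟨rfl, rfl, hkL, hkR⟩ | ⟨rfl, rfl, hkL, hkR⟩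
      · -- a = 2, b = 2 : Q₁ = L ++ 1 :: 1 :: R
        exfalso
        norm_num at htail
        exact no_pair L R hL1 hR1 htail
      · -- a = 3, b = 2
        have hLrep := all_two L hL2 hkL
        have hRrep := all_two R hR2 hkR
        cases R with
        | nil =>
          refine ⟨L.length, Or.inl ?_⟩
          rw [hLrep]; simp
        | cons r R₂ =>
          exfalso
          simp only [List.length_cons, List.replicate_succ, List.cons.injEq] at hRrep
          obtain ⟨rfl, hR₂rep⟩ := hRrep
          have hR₂1 : (1:ℤ) ∉ R₂ := fun hm => hR1 (List.mem_cons_of_mem _ hm)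
          norm_num at htail
          obtain ⟨P, hs, hP⟩ := exists_step htail (by simp)
          have hs' : ContractionStep ((L ++ [2]) ++ 1 :: (2 :: R₂)) P := by simpa using hs
          have h1A : (1:ℤ) ∉ L ++ [2] := by simp [hL1]
          have h1B : (1:ℤ) ∉ (2:ℤ) :: R₂ := by simp [hR₂1]
          rcases step_unique h1A h1B hs' with ⟨he, -, -⟩ | ⟨b', R', he, -, -⟩ |
            ⟨L', a', he, -, -⟩ | ⟨L₃, a₃, b₃, R₃, he1, he2, he3⟩
          · simp at he
          · simp at he
          · simp at he
          · obtain ⟨rfl, ha₃⟩ := concat_eq he1.symm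
            obtain ⟨hb₃, rfl⟩ : b₃ = 2 ∧ R₃ = R₂ := by
              simp only [List.cons.injEq] at he2; exact ⟨he2.1.symm, he2.2.symm⟩
            rw [he3, ha₃, hb₃] at hP
            norm_num at hP
            exact no_pair _ _ hL1 hR₂1 hP
      · -- a = 2, b = 3
        have hLrep := all_two L hL2 hkL
        have hRrep := all_two R hR2 hkR
        cases L with
        | nil =>
          refine ⟨R.length, Or.inr ?_⟩
          rw [hRrep]
          simp [List.reverse_append, List.reverse_replicate]
          simpa using repcast R.length
        | cons l L₂ =>
          exfalso
          simp only [List.length_cons, List.replicate_succ, List.cons.injEq] at hLrep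
          obtain ⟨rfl, hL₂rep⟩ := hLrep
          norm_num at htail
          obtain ⟨P, hs, hP⟩ := exists_step htail (by simp)
          have hs' : ContractionStep (((2:ℤ) :: L₂) ++ 1 :: ((2:ℤ) :: R)) P := by
            simpa using hs
          have h1A : (1:ℤ) ∉ (2:ℤ) :: L₂ := hL1
          have h1B : (1:ℤ) ∉ (2:ℤ) :: R := by simp [hR1]
          rcases step_unique h1A h1B hs' with ⟨he, -, -⟩ | ⟨b', R', he, -, -⟩ |
            ⟨L', a', he, -, -⟩ | ⟨L₃, a₃, b₃, R₃, he1, he2, he3⟩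
          · simp at he
          · simp at he
          · simp at he
          · have ha₃ : a₃ = 2 := by
              have hm : a₃ ∈ (2:ℤ) :: L₂ := by rw [he1]; simp
              rw [List.mem_cons] at hm
              rcases hm with h | h
              · exact h
              · rw [hL₂rep] at h; exact List.eq_of_mem_replicate h
            obtain ⟨hb₃, rfl⟩ : b₃ = 2 ∧ R₃ = R := by
              simp only [List.cons.injEq] at he2; exact ⟨he2.1.symm, he2.2.symm⟩
            have h1L₃ : (1:ℤ) ∉ L₃ := by
              intro hm
              exact h1A (by rw [he1]; exact List.mem_append_left _ hm)
            rw [he3, ha₃, hb₃] at hP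
            norm_num at hP
            exact no_pair _ _ h1L₃ hR1 hP
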